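/- arXiv:1007.5033 — 6 statements merged into one kernel-verified Lean document; each statement's English description precedes it below -/
import Mathlib

section
/- (Pólya's inequality) For every compact set K ⊂ ℝ and every monic real polynomial P of degree n, sup_{x ∈ K} |P(x)| ≥ |K|^n / 2^(2n-1), where |K| denotes the Lebesgue measure of K. -/
/-!
Let `F x = |K ∩ (-∞, x]|`. `F` is `1`-Lipschitz and maps `K` onto `[0, |K|]`, so any points
`y₀, …, yₙ` of `[0, |K|]` are images of points `xᵢ ∈ K` with `|yᵢ - yⱼ| ≤ |xᵢ - xⱼ|`.
Lagrange interpolation of the leading coefficient `1` of `P` at the `xᵢ` gives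
`1 ≤ sup_K |P| * ∑ᵢ ∏_{j ≠ i} |yᵢ - yⱼ|⁻¹`. For the extremal points of the Chebyshev polynomial
`Tₙ` rescaled to `[0, |K|]` this sum is `2 ^ (2n - 1) / |K| ^ n`, since `Tₙ` alternates
between `±1` there.
-/

open Polynomial MeasureTheory Set

namespace Polynomial.Chebyshev

open Finset

theorem coeff_T_natCast_self (R : Type*) [CommRing R] [IsDomain R] [NeZero (2 : R)] (n : ℕ) :
    (T R n).coeff n = 2 ^ (n - 1) := by
  simpa using (T R n).coeff_natDegree

theorem sum_inv_abs_prod_node_sub_node (n : ℕ) :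
    ∑ i ∈ range (n + 1), |∏ j ∈ (range (n + 1)).erase i, (node n i - node n j)|⁻¹
      = 2 ^ (n - 1) := by
  have hcoeff := Lagrange.coeff_eq_sum (s := range (n + 1)) (strictAntiOn_node n).injOn
    (P := T ℝ n) (by rw [degree_T, card_range]; exact_mod_cast n.lt_succ_self)
  rw [card_range, Nat.add_sub_cancel, coeff_T_natCast_self ℝ] at hcoeff
  rw [hcoeff]
  -- `T n` takes the value `(-1) ^ i` at the `i`-th node, which is the sign of the `i`-th
  -- Lagrange weight, so every term of the interpolation formula for its leading coefficient
  -- is nonnegative.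
  refine sum_congr rfl fun i hi => ?_
  have hin : i ≤ n := Nat.lt_succ_iff.mp (mem_range.mp hi)
  have habs : |∏ j ∈ (range (n + 1)).erase i, (node n i - node n j)|
      = (-1) ^ i * ∏ j ∈ (range (n + 1)).erase i, (node n i - node n j) := by
    rw [← abs_of_pos (zero_lt_prod_node_sub_node hin), abs_mul, abs_neg_one_pow, one_mul]
  rw [eval_T_real_node (mem_Iic.mpr hin), habs, mul_inv, ← inv_pow, inv_neg_one, div_eq_mul_inv]

theorem sum_inv_abs_prod_affine_node_sub (n : ℕ) (a b : ℝ) :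
    ∑ i ∈ range (n + 1),
        |∏ j ∈ (range (n + 1)).erase i, ((a + b * node n i) - (a + b * node n j))|⁻¹
      = 2 ^ (n - 1) / |b| ^ n := by
  have hprod (i : ℕ) (hi : i ∈ range (n + 1)) :
      ∏ j ∈ (range (n + 1)).erase i, ((a + b * node n i) - (a + b * node n j))
        = b ^ n * ∏ j ∈ (range (n + 1)).erase i, (node n i - node n j) := by
    rw [prod_congr rfl fun j _ => show _ = b * (node n i - node n j) by ring, prod_mul_distrib,
      prod_const, card_erase_of_mem hi, card_range, Nat.add_sub_cancel]
  rw [sum_congr rfl fun i hi => by rw [hprod i hi, abs_mul, mul_inv, abs_pow],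
    ← mul_sum, sum_inv_abs_prod_node_sub_node, inv_mul_eq_div]

end Polynomial.Chebyshev

open Finset in
theorem Polynomial.Monic.one_le_mul_sum_inv_abs_prod_sub {ι : Type*} [DecidableEq ι] {P : ℝ[X]}
    (hP : P.Monic) {s : Finset ι} (hs : #s = P.natDegree + 1) {x y : ι → ℝ} (hy : InjOn y s)
    (hxy : ∀ i ∈ s, ∀ j ∈ s, |y i - y j| ≤ |x i - x j|) {M : ℝ}
    (hM : ∀ i ∈ s, |P.eval (x i)| ≤ M) :
    1 ≤ M * ∑ i ∈ s, |∏ j ∈ s.erase i, (y i - y j)|⁻¹ := by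
  have hx : InjOn x s := fun i hi j hj hij =>
    hy hi hj (sub_eq_zero.mp (abs_nonpos_iff.mp (by simpa [hij] using hxy i hi j hj)))
  have hlead := Lagrange.leadingCoeff_eq_sum hx (P := P)
    (by rw [hs, degree_eq_natDegree hP.ne_zero]; push_cast; rfl)
  calc (1 : ℝ) = |∑ i ∈ s, P.eval (x i) / ∏ j ∈ s.erase i, (x i - x j)| := by
        rw [← hlead, hP.leadingCoeff, abs_one]
    _ ≤ ∑ i ∈ s, |P.eval (x i) / ∏ j ∈ s.erase i, (x i - x j)| := abs_sum_le_sum_abs _ _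
    _ ≤ ∑ i ∈ s, M * |∏ j ∈ s.erase i, (y i - y j)|⁻¹ := sum_le_sum fun i hi => ?_
    _ = M * ∑ i ∈ s, |∏ j ∈ s.erase i, (y i - y j)|⁻¹ := (mul_sum _ _ _).symm
  have hy_pos : 0 < |∏ j ∈ s.erase i, (y i - y j)| :=
    abs_pos.mpr <| prod_ne_zero_iff.mpr fun j hj =>
      sub_ne_zero.mpr fun h => ne_of_mem_erase hj (hy (mem_of_mem_erase hj) hi h.symm)
  have hyx : |∏ j ∈ s.erase i, (y i - y j)| ≤ |∏ j ∈ s.erase i, (x i - x j)| := by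
    rw [abs_prod, abs_prod]
    exact prod_le_prod (fun _ _ => abs_nonneg _) fun j hj => hxy i hi j (mem_of_mem_erase hj)
  rw [abs_div, div_eq_mul_inv]
  exact mul_le_mul (hM i hi) (inv_anti₀ hy_pos hyx) (inv_nonneg.mpr (abs_nonneg _))
    ((abs_nonneg _).trans (hM i hi))

theorem IsCompact.exists_mem_inter_Iic_eq {α : Type*} [ConditionallyCompleteLinearOrder α]
    [TopologicalSpace α] [OrderClosedTopology α] {K : Set α} (hK : IsCompact K) {y : α}
    (hy : (K ∩ Iic y).Nonempty) : ∃ x ∈ K, K ∩ Iic x = K ∩ Iic y := by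
  have hKy : IsCompact (K ∩ Iic y) := hK.inter_right isClosed_Iic
  obtain ⟨hxK, hxy⟩ := hKy.sSup_mem hy
  exact ⟨_, hxK, subset_antisymm (fun z hz => ⟨hz.1, hz.2.trans hxy⟩)
    fun z hz => ⟨hz.1, le_csSup hKy.bddAbove hz⟩⟩

section DistributionFunction

variable {K : Set ℝ}

theorem measureReal_inter_Iic_mono (hK : volume K ≠ ⊤) {a b : ℝ} (hab : a ≤ b) :
    volume.real (K ∩ Iic a) ≤ volume.real (K ∩ Iic b) :=
  measureReal_mono (inter_subset_inter_right _ (Iic_subset_Iic.mpr hab))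
    (ne_top_of_le_ne_top hK (measure_mono inter_subset_left))

theorem measureReal_inter_Iic_le_add (hK : volume K ≠ ⊤) {a b : ℝ} (hab : a ≤ b) :
    volume.real (K ∩ Iic b) ≤ volume.real (K ∩ Iic a) + (b - a) := by
  have hsub : K ∩ Iic b ⊆ (K ∩ Iic a) ∪ Ioc a b := fun z ⟨hzK, hzb⟩ =>
    (le_or_gt z a).imp (fun h => ⟨hzK, h⟩) fun h => ⟨h, hzb⟩
  have hfin : volume ((K ∩ Iic a) ∪ Ioc a b) ≠ ⊤ :=
    measure_union_ne_top (ne_top_of_le_ne_top hK (measure_mono inter_subset_left))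
      measure_Ioc_lt_top.ne
  calc volume.real (K ∩ Iic b)
      ≤ volume.real ((K ∩ Iic a) ∪ Ioc a b) := measureReal_mono hsub hfin
    _ ≤ volume.real (K ∩ Iic a) + volume.real (Ioc a b) := measureReal_union_le _ _
    _ = volume.real (K ∩ Iic a) + (b - a) := by rw [Real.volume_real_Ioc_of_le hab]

theorem lipschitzWith_one_measureReal_inter_Iic (hK : volume K ≠ ⊤) :
    LipschitzWith 1 fun x => volume.real (K ∩ Iic x) := by
  refine LipschitzWith.of_le_add fun x y => ?_
  rcases le_total x y with h | h
  · linarith [measureReal_inter_Iic_mono hK h, dist_nonneg (x := x) (y := y)]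
  · rw [Real.dist_eq, abs_of_nonneg (sub_nonneg.mpr h)]
    exact measureReal_inter_Iic_le_add hK h

theorem IsCompact.exists_mem_measureReal_inter_Iic_eq (hK : IsCompact K) (hne : K.Nonempty)
    {c : ℝ} (hc : c ∈ Icc 0 (volume.real K)) : ∃ x ∈ K, volume.real (K ∩ Iic x) = c := by
  have hF_inf : volume.real (K ∩ Iic (sInf K)) = 0 := by
    rw [measureReal_def, measure_mono_null (t := {sInf K})
      (fun z hz => le_antisymm hz.2 (csInf_le hK.bddBelow hz.1)) (measure_singleton _),
      ENNReal.toReal_zero]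
  have hF_sup : volume.real (K ∩ Iic (sSup K)) = volume.real K := by
    rw [inter_eq_left.mpr (show K ⊆ Iic (sSup K) from fun z hz => le_csSup hK.bddAbove hz)]
  obtain ⟨y, hy, hFy⟩ := intermediate_value_Icc (csInf_le_csSup hne hK.bddBelow hK.bddAbove)
    (lipschitzWith_one_measureReal_inter_Iic hK.measure_lt_top.ne).continuous.continuousOn
    (hF_inf ▸ hF_sup ▸ hc)
  obtain ⟨x, hxK, hx⟩ := hK.exists_mem_inter_Iic_eq ⟨sInf K, hK.sInf_mem hne, hy.1⟩
  exact ⟨x, hxK, hx ▸ hFy⟩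

theorem IsCompact.exists_mem_abs_sub_le_abs_sub {ι : Type*} (hK : IsCompact K) (hne : K.Nonempty)
    {y : ι → ℝ} (hy : ∀ i, y i ∈ Icc 0 (volume.real K)) :
    ∃ x : ι → ℝ, (∀ i, x i ∈ K) ∧ ∀ i j, |y i - y j| ≤ |x i - x j| := by
  choose x hxK hx using fun i => hK.exists_mem_measureReal_inter_Iic_eq hne (hy i)
  refine ⟨x, hxK, fun i j => ?_⟩
  simpa [hx, Real.dist_eq] using
    (lipschitzWith_one_measureReal_inter_Iic hK.measure_lt_top.ne).dist_le_mul (x i) (x j)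

end DistributionFunction

/-- Pólya's inequality: for every compact `K ⊆ ℝ` and every monic real polynomial `P` of
degree `n`, `sup_{x ∈ K} |P(x)| ≥ |K|^n / 2^(2n-1)`. -/
theorem polya_inequality (K : Set ℝ) (hK : IsCompact K) (n : ℕ) (hn : 1 ≤ n)
    (P : Polynomial ℝ) (hP : P.Monic) (hdeg : P.natDegree = n) :
    (volume K).toReal ^ n / 2 ^ (2 * n - 1) ≤ sSup ((fun x => |P.eval x|) '' K) := by
  set A := (volume K).toReal
  set M := sSup ((fun x => |P.eval x|) '' K)
  have hM_nonneg : 0 ≤ M := Real.sSup_nonneg (by rintro _ ⟨x, -, rfl⟩; exact abs_nonneg _)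
  obtain hA | hA : 0 = A ∨ 0 < A := ENNReal.toReal_nonneg.eq_or_lt
  · rw [← hA, zero_pow (by omega), zero_div]
    exact hM_nonneg
  have hK_ne : K.Nonempty := nonempty_iff_ne_empty.mpr fun h => by simp [A, h] at hA
  set y : ℕ → ℝ := fun i => A / 2 + A / 2 * Chebyshev.node n i
  have hy_mem (i : ℕ) : y i ∈ Icc 0 A := by
    obtain ⟨h₁, h₂⟩ := Chebyshev.node_mem_Icc (n := n) (i := i)
    simp only [y, mem_Icc]
    constructor <;> nlinarith
  have hy_inj : InjOn y (Finset.range (n + 1)) := fun i hi j hj hij =>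
    (Chebyshev.strictAntiOn_node n).injOn hi hj
      (mul_left_cancel₀ (by positivity) (add_left_cancel hij))
  obtain ⟨x, hxK, hxy⟩ := hK.exists_mem_abs_sub_le_abs_sub hK_ne hy_mem
  have key := hP.one_le_mul_sum_inv_abs_prod_sub (s := Finset.range (n + 1)) (M := M)
    (by rw [Finset.card_range, hdeg]) hy_inj (fun i _ j _ => hxy i j)
    (fun i _ => le_csSup ((hK.image P.continuous.abs).bddAbove) ⟨x i, hxK i, rfl⟩)
  have hconst : (2 : ℝ) ^ (n - 1) / (A / 2) ^ n = 2 ^ (2 * n - 1) / A ^ n := by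
    rw [div_pow, div_div_eq_mul_div, ← pow_add, show n - 1 + n = 2 * n - 1 by omega]
  rw [Chebyshev.sum_inv_abs_prod_affine_node_sub, abs_of_pos (half_pos hA), hconst,
    mul_div_assoc', le_div_iff₀ (by positivity), one_mul] at key
  rwa [div_le_iff₀ (by positivity)]
end

section
/- If K is compact and L_n(K) is the minimal sup-norm on K of a monic degree-n polynomial, then |K| ≤ 4 · L_n(K)^(1/n). -/
/-!
Let `g x = |K ∩ (-∞, x]|`. It is `1`-Lipschitz and maps `K` onto `[0, |K|]`. If the monic `P`
factors over `ℂ` as `∏ (X - zᵢ)`, the real polynomial `Q = ∏ (X - g (Re zᵢ))` is monic of the same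
degree and satisfies `|Q (g x)| ≤ |P x|`, because `|g x - g (Re z)| ≤ |x - Re z| ≤ |x - z|`.
Chebyshev's bound on `[0, |K|]` gives a point where `|Q| ≥ 2 (|K| / 4) ^ n`, and it is of the
form `g x` with `x ∈ K`.
-/

open Polynomial MeasureTheory Set

/-- `chebNorm K n` is `L_n(K)`: the infimum over monic real polynomials `P` of degree `n`
of the sup of `|P|` on `K`. -/
noncomputable def chebNorm (K : Set ℝ) (n : ℕ) : ℝ :=
  sInf {y | ∃ P : Polynomial ℝ, P.Monic ∧ P.natDegree = n ∧
    y = sSup ((fun x => |P.eval x|) '' K)}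

namespace Polynomial.Chebyshev

theorem coeff_le_two_pow_mul_of_forall_abs_le {n : ℕ} {P : ℝ[X]} {M : ℝ} (hM : 0 < M)
    (hPdeg : P.degree ≤ n) (hP : ∀ x ∈ Icc (-1) 1, |P.eval x| ≤ M) :
    P.coeff n ≤ 2 ^ (n - 1) * M := by
  have hscaled := coeff_le_of_forall_abs_le_one (P := Polynomial.C M⁻¹ * P)
    ((degree_mul_le _ _).trans (by simpa using add_le_add degree_C_le hPdeg)) fun x hx => by
      rw [eval_mul, eval_C, abs_mul, abs_inv, abs_of_pos hM, inv_mul_le_iff₀ hM, mul_one]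
      exact hP x hx
  rw [coeff_C_mul, inv_mul_le_iff₀ hM] at hscaled
  linarith

theorem exists_coeff_le_two_pow_mul_abs_eval {n : ℕ} {P : ℝ[X]} (hPdeg : P.degree ≤ n) :
    ∃ x ∈ Icc (-1 : ℝ) 1, P.coeff n ≤ 2 ^ (n - 1) * |P.eval x| := by
  obtain ⟨x, hx, hmax⟩ := isCompact_Icc.exists_isMaxOn (nonempty_Icc.2 (by norm_num))
    (P.continuous.abs.continuousOn (s := Icc (-1 : ℝ) 1))
  refine ⟨x, hx, le_of_forall_pos_le_add fun ε hε => ?_⟩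
  calc P.coeff n ≤ 2 ^ (n - 1) * (|P.eval x| + ε / 2 ^ (n - 1)) :=
        coeff_le_two_pow_mul_of_forall_abs_le (by positivity) hPdeg fun y hy =>
          (hmax hy).trans (le_add_of_nonneg_right (by positivity))
    _ = 2 ^ (n - 1) * |P.eval x| + ε := by field_simp

end Polynomial.Chebyshev

theorem Polynomial.Monic.exists_two_mul_pow_le_abs_eval {P : ℝ[X]} (hP : P.Monic)
    (hdeg : P.natDegree ≠ 0) {a b : ℝ} (hab : a ≤ b) :
    ∃ x ∈ Icc a b, 2 * ((b - a) / 4) ^ P.natDegree ≤ |P.eval x| := by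
  rcases hab.eq_or_lt with rfl | hlt
  · exact ⟨a, left_mem_Icc.2 le_rfl, by simp [hdeg]⟩
  set c := (b - a) / 2 with hc
  have hc0 : 0 < c := by rw [hc]; linarith
  set L : ℝ[X] := C c * X + C ((a + b) / 2)
  have hL : L.natDegree = 1 := natDegree_linear hc0.ne'
  have hcoeff : (P.comp L).coeff P.natDegree = c ^ P.natDegree := by
    have := coeff_comp_degree_mul_degree (p := P) (q := L) (by rw [hL]; exact one_ne_zero)
    rwa [hL, mul_one, hP.leadingCoeff, one_mul, leadingCoeff_linear hc0.ne'] at this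
  have hdegL : (P.comp L).degree ≤ P.natDegree := by
    simpa [natDegree_comp, hL] using degree_le_natDegree (p := P.comp L)
  obtain ⟨t, ⟨ht1, ht2⟩, hbound⟩ := Chebyshev.exists_coeff_le_two_pow_mul_abs_eval hdegL
  refine ⟨c * t + (a + b) / 2, ⟨by nlinarith, by nlinarith⟩, ?_⟩
  obtain ⟨k, hk⟩ := Nat.exists_eq_succ_of_ne_zero hdeg
  rw [hcoeff, eval_comp] at hbound
  simp only [L, eval_add, eval_mul, eval_C, eval_X] at hbound
  rw [hk, Nat.succ_sub_one] at hbound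
  rw [hk, show (b - a) / 4 = c / 2 by rw [hc]; ring]
  calc 2 * (c / 2) ^ (k + 1) = c ^ (k + 1) / 2 ^ k := by rw [div_pow, pow_succ 2 k]; field_simp
    _ ≤ _ := by rw [div_le_iff₀ (by positivity), mul_comm]; exact hbound

noncomputable def volumeInterIic (s : Set ℝ) (x : ℝ) : ℝ := (volume (s ∩ Iic x)).toReal

section volumeInterIic

variable {s : Set ℝ}

theorem volumeInterIic_add_volume_inter_Ioc (hs : volume s ≠ ⊤) {x y : ℝ} (hxy : x ≤ y) :
    volumeInterIic s x + (volume (s ∩ Ioc x y)).toReal = volumeInterIic s y := by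
  have hsplit := measure_inter_add_sdiff (μ := volume) (s ∩ Iic y) (measurableSet_Iic (a := x))
  have hdiff : (s ∩ Iic y) \ Iic x = s ∩ Ioc x y := by
    ext z; simp only [mem_sdiff, mem_inter_iff, mem_Iic, mem_Ioc, not_le]; tauto
  rw [inter_assoc, Iic_inter_Iic, min_eq_right hxy, hdiff] at hsplit
  have hfin : ∀ t, volume (s ∩ t) ≠ ⊤ := fun t => measure_ne_top_of_subset inter_subset_left hs
  rw [volumeInterIic, volumeInterIic, ← hsplit, ENNReal.toReal_add (hfin _) (hfin _)]

theorem lipschitzWith_one_volumeInterIic (hs : volume s ≠ ⊤) :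
    LipschitzWith 1 (volumeInterIic s) := by
  refine LipschitzWith.of_le_add fun x y => ?_
  rcases le_total x y with hxy | hyx
  · rw [← volumeInterIic_add_volume_inter_Ioc hs hxy]
    linarith [ENNReal.toReal_nonneg (a := volume (s ∩ Ioc x y)), dist_nonneg (x := x) (y := y)]
  · rw [← volumeInterIic_add_volume_inter_Ioc hs hyx, Real.dist_eq, abs_of_nonneg (by linarith)]
    gcongr
    calc (volume (s ∩ Ioc y x)).toReal ≤ (volume (Ioc y x)).toReal :=
          ENNReal.toReal_mono measure_Ioc_lt_top.ne (measure_mono inter_subset_right)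
      _ = x - y := by rw [Real.volume_Ioc, ENNReal.toReal_ofReal (by linarith)]

theorem volumeInterIic_csInf (hs : BddBelow s) : volumeInterIic s (sInf s) = 0 := by
  have hsub : (s ∩ Iic (sInf s)).Subsingleton := fun x hx y hy =>
    ((hx.2).antisymm (csInf_le hs hx.1)).trans ((hy.2).antisymm (csInf_le hs hy.1)).symm
  rw [volumeInterIic, hsub.measure_zero, ENNReal.toReal_zero]

theorem volumeInterIic_csSup (hs : BddAbove s) : volumeInterIic s (sSup s) = (volume s).toReal := by
  rw [volumeInterIic, inter_eq_left.2 fun x hx => mem_Iic.2 (le_csSup hs hx)]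

theorem IsCompact.exists_mem_volumeInterIic_eq {K : Set ℝ} (hK : IsCompact K) {y : ℝ}
    (hy : (K ∩ Iic y).Nonempty) : ∃ x ∈ K, volumeInterIic K x = volumeInterIic K y := by
  have hKy : IsCompact (K ∩ Iic y) := hK.inter_right isClosed_Iic
  obtain ⟨hxK, hxy⟩ := hKy.sSup_mem hy
  refine ⟨_, hxK, ?_⟩
  have hgap : K ∩ Ioc (sSup (K ∩ Iic y)) y = ∅ := by
    refine eq_empty_of_forall_notMem fun z ⟨hzK, hz1, hz2⟩ => ?_
    exact (le_csSup hKy.bddAbove ⟨hzK, hz2⟩).not_gt hz1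
  rw [← volumeInterIic_add_volume_inter_Ioc hK.measure_lt_top.ne hxy, hgap]
  simp

theorem IsCompact.Icc_subset_image_volumeInterIic {K : Set ℝ} (hK : IsCompact K)
    (hne : K.Nonempty) : Icc 0 (volume K).toReal ⊆ volumeInterIic K '' K := by
  intro t ht
  rw [← volumeInterIic_csInf hK.bddBelow, ← volumeInterIic_csSup hK.bddAbove] at ht
  obtain ⟨y, ⟨hy, -⟩, rfl⟩ := intermediate_value_Icc (csInf_le_csSup hne hK.bddBelow hK.bddAbove)
    (lipschitzWith_one_volumeInterIic hK.measure_lt_top.ne).continuous.continuousOn ht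
  exact hK.exists_mem_volumeInterIic_eq ⟨_, hK.sInf_mem hne, hy⟩

end volumeInterIic

protected theorem Multiset.norm_prod {α : Type*} [SeminormedCommRing α] [NormMulClass α]
    [NormOneClass α] (m : Multiset α) :
    ‖m.prod‖ = (m.map norm).prod :=
  map_multiset_prod (normHom.toMonoidHom : α →* ℝ) _

theorem Polynomial.Monic.abs_eval_eq_prod_norm_sub_aroots {P : ℝ[X]} (hP : P.Monic) (x : ℝ) :
    |P.eval x| = ((P.aroots ℂ).map fun z => ‖(x : ℂ) - z‖).prod := by
  have h := (IsAlgClosed.splits (P.map (algebraMap ℝ ℂ))).aeval_eq_prod_aroots_of_monic hP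
    (algebraMap ℝ ℂ x)
  rw [aeval_algebraMap_apply_eq_algebraMap_eval, Complex.coe_algebraMap] at h
  rw [← Real.norm_eq_abs, ← Complex.norm_real, h, Multiset.norm_prod, Multiset.map_map]
  rfl

theorem Polynomial.Monic.exists_monic_abs_eval_comp_le {f : ℝ → ℝ} (hf : LipschitzWith 1 f)
    {P : ℝ[X]} (hP : P.Monic) :
    ∃ Q : ℝ[X], Q.Monic ∧ Q.natDegree = P.natDegree ∧ ∀ x, |Q.eval (f x)| ≤ |P.eval x| := by
  set s := (P.aroots ℂ).map fun z => f z.re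
  refine ⟨(s.map (X - C ·)).prod, monic_multiset_prod_of_monic _ _ fun a _ => monic_X_sub_C a,
    ?_, fun x => ?_⟩
  · rw [natDegree_multiset_prod_X_sub_C_eq_card, Multiset.card_map,
      IsAlgClosed.card_aroots_eq_natDegree]
  · rw [hP.abs_eval_eq_prod_norm_sub_aroots, eval_multiset_prod, ← Real.norm_eq_abs,
      Multiset.norm_prod, Multiset.map_map, Multiset.map_map, Multiset.map_map]
    refine Multiset.prod_map_le_prod_map₀ _ _ (fun _ _ => norm_nonneg _) fun z _ => ?_
    calc ‖(X - C (f z.re)).eval (f x)‖ = |f x - f z.re| := by simp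
      _ ≤ |x - z.re| := by simpa [← Real.dist_eq] using hf.dist_le_mul x z.re
      _ ≤ ‖(x : ℂ) - z‖ := by simpa using Complex.abs_re_le_norm ((x : ℂ) - z)

theorem IsCompact.exists_mem_two_mul_pow_le_abs_eval {K : Set ℝ} (hK : IsCompact K)
    (hne : K.Nonempty) {P : ℝ[X]} (hP : P.Monic) (hdeg : P.natDegree ≠ 0) :
    ∃ x ∈ K, 2 * ((volume K).toReal / 4) ^ P.natDegree ≤ |P.eval x| := by
  obtain ⟨Q, hQ, hQdeg, hQP⟩ :=
    hP.exists_monic_abs_eval_comp_le (lipschitzWith_one_volumeInterIic hK.measure_lt_top.ne)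
  obtain ⟨u, hu, hQu⟩ := hQ.exists_two_mul_pow_le_abs_eval (hQdeg ▸ hdeg) ENNReal.toReal_nonneg
  obtain ⟨x, hx, rfl⟩ := hK.Icc_subset_image_volumeInterIic hne hu
  exact ⟨x, hx, by simpa [hQdeg] using hQu.trans (hQP x)⟩

theorem two_mul_pow_le_chebNorm {K : Set ℝ} (hK : IsCompact K) {n : ℕ} (hn : n ≠ 0) :
    2 * ((volume K).toReal / 4) ^ n ≤ chebNorm K n := by
  refine le_csInf ⟨_, X ^ n, monic_X_pow n, natDegree_X_pow n, rfl⟩ ?_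
  rintro _ ⟨P, hP, rfl, rfl⟩
  rcases K.eq_empty_or_nonempty with rfl | hne
  · simp [hn]
  obtain ⟨x, hx, hPx⟩ := hK.exists_mem_two_mul_pow_le_abs_eval hne hP hn
  exact hPx.trans (le_csSup (hK.bddAbove_image P.continuous.abs.continuousOn) ⟨x, hx, rfl⟩)

/-- For compact `K`, `|K| ≤ 4 · L_n(K)^(1/n)`. -/
theorem measure_le_four_mul_chebNorm_rpow (K : Set ℝ) (hK : IsCompact K) (n : ℕ)
    (hn : 1 ≤ n) :
    (volume K).toReal ≤ 4 * chebNorm K n ^ ((1 : ℝ) / n) := by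
  have hn0 : n ≠ 0 := Nat.one_le_iff_ne_zero.1 hn
  have hℓ : 0 ≤ (volume K).toReal / 4 := by positivity
  have hpow : ((volume K).toReal / 4) ^ n ≤ chebNorm K n :=
    le_trans (le_mul_of_one_le_left (by positivity) one_le_two) (two_mul_pow_le_chebNorm hK hn0)
  have hroot : (volume K).toReal / 4 ≤ chebNorm K n ^ ((1 : ℝ) / n) := by
    rw [one_div, ← Real.pow_rpow_inv_natCast hℓ hn0]
    exact Real.rpow_le_rpow (by positivity) hpow (by positivity)
  linarith
end

section
/- If a(n) ∈ [c, C] for all n with 0 < c ≤ C, then for every E ∈ ℝ, liminf_{n→∞} (1/n) log ‖Φ_n(E)‖ ≥ 0; hence if limsup_{n→∞} (1/n) log ‖Φ_n(E)‖ = 0, then (1/n) log ‖Φ_n(E)‖ → 0 and limsup_{n→∞} (1/n) log |tr Φ_n(E)| ≤ 0. -/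
open Matrix Filter

/-- The one-step transfer matrix `[[ (E - b(k))/a(k), -a(k-1)/a(k) ], [1, 0]]`. -/
noncomputable def oneStep (a b : ℕ → ℝ) (E : ℝ) (k : ℕ) : Matrix (Fin 2) (Fin 2) ℝ :=
  !![(E - b k) / a k, -(a (k - 1)) / a k; 1, 0]

/-- The `n`-step transfer matrix `Φ_n(E) = T_n ⋯ T_1`. -/
noncomputable def transfer (a b : ℕ → ℝ) (E : ℝ) : ℕ → Matrix (Fin 2) (Fin 2) ℝ
  | 0 => 1
  | n + 1 => oneStep a b E (n + 1) * transfer a b E n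

/-- The `ℓ²` operator norm of a 2×2 real matrix. -/
noncomputable def opNorm (A : Matrix (Fin 2) (Fin 2) ℝ) : ℝ :=
  ‖Matrix.toEuclideanCLM (𝕜 := ℝ) A‖


/-!
The one-step matrices have determinant `a (k - 1) / a k`, so `det Φ_n = a 0 / a n ≥ c / C`, and
`|det A| ≤ 2 ‖A‖²` bounds `‖Φ_n‖` below uniformly in `n`: this gives `liminf ≥ 0`. The one-step
matrices are also uniformly bounded, so `‖Φ_n‖ ≤ Lⁿ`; the exponents `(1 / n) log ‖Φ_n‖` are
therefore bounded and converge once their limsup vanishes, and `|tr Φ_n| ≤ 2 ‖Φ_n‖` passes the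
bound on to the trace.
-/

section EuclideanOpNorm

variable {𝕜 n : Type*} [RCLike 𝕜] [Fintype n] [DecidableEq n]

lemma Matrix.norm_apply_le_norm_toEuclideanCLM (A : Matrix n n 𝕜) (i j : n) :
    ‖A i j‖ ≤ ‖toEuclideanCLM (𝕜 := 𝕜) A‖ :=
  calc ‖A i j‖ = ‖toEuclideanCLM (𝕜 := 𝕜) A (EuclideanSpace.single j 1) i‖ := by simp
    _ ≤ ‖toEuclideanCLM (𝕜 := 𝕜) A (EuclideanSpace.single j 1)‖ := PiLp.norm_apply_le _ _
    _ ≤ ‖toEuclideanCLM (𝕜 := 𝕜) A‖ * ‖EuclideanSpace.single j (1 : 𝕜)‖ :=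
        ContinuousLinearMap.le_opNorm _ _
    _ = ‖toEuclideanCLM (𝕜 := 𝕜) A‖ := by simp

lemma Matrix.norm_toEuclideanCLM_single_le (i j : n) (c : 𝕜) :
    ‖toEuclideanCLM (𝕜 := 𝕜) (single i j c)‖ ≤ ‖c‖ := by
  refine ContinuousLinearMap.opNorm_le_bound _ (norm_nonneg c) fun x => ?_
  have hx : toEuclideanCLM (𝕜 := 𝕜) (single i j c) x = EuclideanSpace.single i (c * x j) := by
    ext k
    simp [Matrix.single_mulVec, Function.update_apply]
  rw [hx, EuclideanSpace.single, PiLp.norm_single, norm_mul]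
  exact mul_le_mul_of_nonneg_left (PiLp.norm_apply_le x j) (norm_nonneg c)

lemma Matrix.norm_toEuclideanCLM_le_sum (A : Matrix n n 𝕜) :
    ‖toEuclideanCLM (𝕜 := 𝕜) A‖ ≤ ∑ i, ∑ j, ‖A i j‖ := by
  conv_lhs => rw [A.matrix_eq_sum_single]
  simp only [map_sum]
  exact (norm_sum_le _ _).trans (Finset.sum_le_sum fun i _ => (norm_sum_le _ _).trans
    (Finset.sum_le_sum fun j _ => norm_toEuclideanCLM_single_le i j _))

end EuclideanOpNorm

lemma abs_apply_le_opNorm (A : Matrix (Fin 2) (Fin 2) ℝ) (i j : Fin 2) : |A i j| ≤ opNorm A :=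
  A.norm_apply_le_norm_toEuclideanCLM i j

lemma opNorm_le_sum_abs (A : Matrix (Fin 2) (Fin 2) ℝ) :
    opNorm A ≤ |A 0 0| + |A 0 1| + (|A 1 0| + |A 1 1|) := by
  simpa [opNorm, Fin.sum_univ_two] using A.norm_toEuclideanCLM_le_sum

lemma opNorm_mul_le (A B : Matrix (Fin 2) (Fin 2) ℝ) : opNorm (A * B) ≤ opNorm A * opNorm B := by
  simpa only [opNorm, map_mul] using norm_mul_le _ _

lemma abs_trace_le_two_mul_opNorm (A : Matrix (Fin 2) (Fin 2) ℝ) : |A.trace| ≤ 2 * opNorm A := by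
  rw [trace_fin_two]
  linarith [abs_add_le (A 0 0) (A 1 1), abs_apply_le_opNorm A 0 0, abs_apply_le_opNorm A 1 1]

lemma abs_det_le_two_mul_opNorm_sq (A : Matrix (Fin 2) (Fin 2) ℝ) : |A.det| ≤ 2 * opNorm A ^ 2 := by
  rw [det_fin_two]
  calc |A 0 0 * A 1 1 - A 0 1 * A 1 0| ≤ |A 0 0| * |A 1 1| + |A 0 1| * |A 1 0| := by
        simpa only [abs_mul] using abs_sub (A 0 0 * A 1 1) (A 0 1 * A 1 0)
    _ ≤ opNorm A * opNorm A + opNorm A * opNorm A := by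
        have hA := abs_apply_le_opNorm A
        have hA0 : 0 ≤ opNorm A := norm_nonneg _
        exact add_le_add (mul_le_mul (hA 0 0) (hA 1 1) (abs_nonneg _) hA0)
          (mul_le_mul (hA 0 1) (hA 1 0) (abs_nonneg _) hA0)
    _ = 2 * opNorm A ^ 2 := by ring

section Transfer

variable {a b : ℕ → ℝ} {E : ℝ}

lemma det_oneStep {k : ℕ} (hk : a k ≠ 0) : (oneStep a b E k).det = a (k - 1) / a k := by
  rw [oneStep, det_fin_two_of]
  field_simp
  ring

lemma det_transfer (ha : ∀ n, a n ≠ 0) (n : ℕ) : (transfer a b E n).det = a 0 / a n := by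
  induction n with
  | zero => simp [transfer, div_self (ha 0)]
  | succ n ih =>
    rw [transfer, det_mul, det_oneStep (ha _), ih, Nat.add_sub_cancel]
    field_simp [ha n]

lemma opNorm_transfer_le_pow {L : ℝ} (hL : ∀ k, opNorm (oneStep a b E k) ≤ L) (n : ℕ) :
    opNorm (transfer a b E n) ≤ L ^ n := by
  induction n with
  | zero => simp [transfer, opNorm]
  | succ n ih =>
    calc opNorm (transfer a b E (n + 1))
        ≤ opNorm (oneStep a b E (n + 1)) * opNorm (transfer a b E n) := opNorm_mul_le _ _
      _ ≤ L * L ^ n := mul_le_mul (hL _) ih (norm_nonneg _) ((norm_nonneg _).trans (hL 0))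
      _ = L ^ (n + 1) := (pow_succ' L n).symm

variable {c C : ℝ}

lemma opNorm_oneStep_le (hc : 0 < c) (ha : ∀ n, a n ∈ Set.Icc c C) {B : ℝ}
    (hb : ∀ n, |b n| ≤ B) (k : ℕ) :
    opNorm (oneStep a b E k) ≤ (|E| + B) / c + C / c + 1 := by
  have hak : 0 < a k := hc.trans_le (ha k).1
  have h00 : |(E - b k) / a k| ≤ (|E| + B) / c := by
    rw [abs_div, abs_of_pos hak]
    exact div_le_div₀ (by linarith [abs_nonneg E, abs_nonneg (b k), hb k])
      ((abs_sub _ _).trans (by linarith [hb k])) hc (ha k).1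
  have h01 : |-a (k - 1) / a k| ≤ C / c := by
    rw [abs_div, abs_neg, abs_of_pos (hc.trans_le (ha _).1), abs_of_pos hak]
    exact div_le_div₀ (hc.le.trans ((ha k).1.trans (ha k).2)) (ha _).2 hc (ha k).1
  calc opNorm (oneStep a b E k) ≤ |(E - b k) / a k| + |-a (k - 1) / a k| + (|1| + |0|) :=
        opNorm_le_sum_abs _
    _ ≤ (|E| + B) / c + C / c + 1 := by simp only [abs_one, abs_zero]; linarith

lemma sqrt_le_opNorm_transfer (hc : 0 < c) (ha : ∀ n, a n ∈ Set.Icc c C) (n : ℕ) :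
    √(c / (2 * C)) ≤ opNorm (transfer a b E n) := by
  have hapos : ∀ n, 0 < a n := fun n => hc.trans_le (ha n).1
  have hdet : c / C ≤ |(transfer a b E n).det| := by
    rw [det_transfer (fun n => (hapos n).ne'), abs_of_pos (div_pos (hapos 0) (hapos n))]
    exact div_le_div₀ (hapos 0).le (ha 0).1 (hapos n) (ha n).2
  refine Real.sqrt_le_iff.2 ⟨norm_nonneg _, ?_⟩
  rw [mul_comm, ← div_div]
  linarith [abs_det_le_two_mul_opNorm_sq (transfer a b E n)]

end Transfer

section Asymptotics

variable {ι : Type*} {l : Filter ι} [l.NeBot]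

lemma Real.liminf_nonneg_of_le_of_tendsto {ℓ u : ι → ℝ} (hℓu : ℓ ≤ᶠ[l] u)
    (hℓ : Tendsto ℓ l (nhds 0)) : 0 ≤ liminf u l := by
  by_cases hu : IsCoboundedUnder (· ≥ ·) l u
  · exact hℓ.liminf_eq.symm.trans_le (liminf_le_liminf hℓu hℓ.isBoundedUnder_ge hu)
  · rw [Real.liminf_of_not_isCoboundedUnder hu]

lemma Real.limsup_nonpos_of_le_of_tendsto {u h : ι → ℝ} (huh : u ≤ᶠ[l] h)
    (hh : Tendsto h l (nhds 0)) : limsup u l ≤ 0 := by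
  by_cases hu : IsCoboundedUnder (· ≤ ·) l u
  · exact (limsup_le_limsup huh hu hh.isBoundedUnder_le).trans_eq hh.limsup_eq
  · rw [Real.limsup_of_not_isCoboundedUnder hu]

end Asymptotics

lemma tendsto_one_div_natCast_mul_zero (x : ℝ) :
    Tendsto (fun n : ℕ => 1 / (n : ℝ) * x) atTop (nhds 0) := by
  simpa using tendsto_one_div_atTop_nhds_zero_nat.mul_const x

lemma limsup_one_div_mul_log_abs_nonpos {u v : ℕ → ℝ} {K : ℝ} (hK : 0 < K) (hv : ∀ n, 0 < v n)
    (huv : ∀ n, |u n| ≤ K * v n)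
    (hv_exp : Tendsto (fun n : ℕ => 1 / (n : ℝ) * Real.log (v n)) atTop (nhds 0)) :
    limsup (fun n : ℕ => 1 / (n : ℝ) * Real.log |u n|) atTop ≤ 0 := by
  -- The `max` with `0` covers the indices where `u n = 0`, since `Real.log 0 = 0`.
  refine Real.limsup_nonpos_of_le_of_tendsto (h := fun n : ℕ =>
    max (1 / (n : ℝ) * Real.log K + 1 / (n : ℝ) * Real.log (v n)) 0) (.of_forall fun n => ?_) ?_
  · rcases eq_or_ne (u n) 0 with hu | hu
    · simp [hu]
    refine le_max_of_le_left ?_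
    rw [← mul_add, ← Real.log_mul hK.ne' (hv n).ne']
    exact mul_le_mul_of_nonneg_left (Real.log_le_log (abs_pos.2 hu) (huv n)) (by positivity)
  · simpa using ((tendsto_one_div_natCast_mul_zero (Real.log K)).add hv_exp).max
      (tendsto_const_nhds (x := 0))

theorem liminf_log_transfer_nonneg_general (a b : ℕ → ℝ) (c C : ℝ) (hc : 0 < c)
    (ha : ∀ n, a n ∈ Set.Icc c C)
    (hb : ∃ C', ∀ n, |b n| ≤ C') (E : ℝ) :
    0 ≤ atTop.liminf
        (fun n : ℕ => (1 / (n : ℝ)) * Real.log (opNorm (transfer a b E n))) ∧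
    (atTop.limsup
        (fun n : ℕ => (1 / (n : ℝ)) * Real.log (opNorm (transfer a b E n))) = 0 →
      Tendsto (fun n : ℕ => (1 / (n : ℝ)) * Real.log (opNorm (transfer a b E n)))
        atTop (nhds 0) ∧
      atTop.limsup
        (fun n : ℕ => (1 / (n : ℝ)) * Real.log |Matrix.trace (transfer a b E n)|) ≤ 0) := by
  obtain ⟨B, hB⟩ := hb
  set f := fun n : ℕ => (1 / (n : ℝ)) * Real.log (opNorm (transfer a b E n))
  set m := √(c / (2 * C))
  set L := (|E| + B) / c + C / c + 1
  have hm : 0 < m := Real.sqrt_pos.2 (div_pos hc (by linarith [(ha 0).1, (ha 0).2]))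
  have hm_le : ∀ n, m ≤ opNorm (transfer a b E n) := sqrt_le_opNorm_transfer hc ha
  have hpos : ∀ n, 0 < opNorm (transfer a b E n) := fun n => hm.trans_le (hm_le n)
  have hf_ge : ∀ n : ℕ, 1 / (n : ℝ) * Real.log m ≤ f n := fun n =>
    mul_le_mul_of_nonneg_left (Real.log_le_log hm (hm_le n)) (by positivity)
  have hf_le : ∀ n : ℕ, n ≠ 0 → f n ≤ Real.log L := fun n hn => by
    have hlog := Real.log_le_log (hpos n) (opNorm_transfer_le_pow (opNorm_oneStep_le hc ha hB) n)
    rw [Real.log_pow] at hlog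
    calc f n ≤ 1 / (n : ℝ) * (n * Real.log L) :=
          mul_le_mul_of_nonneg_left hlog (by positivity)
      _ = Real.log L := by field_simp
  have hliminf : 0 ≤ liminf f atTop :=
    Real.liminf_nonneg_of_le_of_tendsto (.of_forall hf_ge) (tendsto_one_div_natCast_mul_zero _)
  refine ⟨hliminf, fun hlimsup => ?_⟩
  have htendsto : Tendsto f atTop (nhds 0) :=
    tendsto_of_le_liminf_of_limsup_le hliminf hlimsup.le
      ⟨_, eventually_map.2 ((eventually_ne_atTop 0).mono hf_le)⟩
      ((tendsto_one_div_natCast_mul_zero _).isBoundedUnder_ge.mono_ge (.of_forall hf_ge))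
  exact ⟨htendsto, limsup_one_div_mul_log_abs_nonpos two_pos hpos
    (fun n => abs_trace_le_two_mul_opNorm _) htendsto⟩

theorem liminf_log_transfer_nonneg (a b : ℕ → ℝ) (c C : ℝ) (hc : 0 < c) (hcC : c ≤ C)
    (ha : ∀ n, a n ∈ Set.Icc c C) (ha0 : a 0 = 1)
    (hb : ∃ C', ∀ n, |b n| ≤ C') (E : ℝ) :
    0 ≤ atTop.liminf
        (fun n : ℕ => (1 / (n : ℝ)) * Real.log (opNorm (transfer a b E n))) ∧
    (atTop.limsup
        (fun n : ℕ => (1 / (n : ℝ)) * Real.log (opNorm (transfer a b E n))) = 0 →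
      Tendsto (fun n : ℕ => (1 / (n : ℝ)) * Real.log (opNorm (transfer a b E n)))
        atTop (nhds 0) ∧
      atTop.limsup
        (fun n : ℕ => (1 / (n : ℝ)) * Real.log |Matrix.trace (transfer a b E n)|) ≤ 0) :=
  liminf_log_transfer_nonneg_general a b c C hc ha hb E
end

section
/- (Chebyshev alternation, uniqueness direction) Let K ⊂ ℝ be compact and P a monic polynomial of degree n such that there exist points E_1 > E_2 > ⋯ > E_{n+1} in K with P(E_k) = (-1)^{k+1} · sup_{E∈K}|P(E)|. Then P attains the infimum in the definition of L_n(K): sup_{K}|P| = L_n(K). -/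
open Polynomial

/-! If a monic `Q` of degree `n` had `sup_K |Q| < M := sup_K |P|`, then at each alternation point
`(-1)^i (P - Q)(E i) ≥ M - |Q(E i)| > 0`. So `P - Q` changes sign between consecutive points and
has `n` roots by the intermediate value theorem, although it is nonzero of degree `< n`, both
polynomials being monic of degree `n`. -/

open Set

theorem exists_mem_Ioo_eq_zero_of_mul_neg {α δ : Type*} [ConditionallyCompleteLinearOrder α]
    [TopologicalSpace α] [OrderTopology α] [DenselyOrdered α] [Ring δ] [LinearOrder δ]
    [IsStrictOrderedRing δ] [TopologicalSpace δ] [OrderClosedTopology δ] {a b : α} {f : α → δ}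
    (hab : a ≤ b) (hf : ContinuousOn f (Icc a b)) (hneg : f a * f b < 0) :
    ∃ x ∈ Ioo a b, f x = 0 := by
  rcases mul_neg_iff.mp hneg with ⟨ha, hb⟩ | ⟨ha, hb⟩
  · exact intermediate_value_Ioo' hab hf ⟨hb, ha⟩
  · exact intermediate_value_Ioo hab hf ⟨ha, hb⟩

theorem mul_neg_of_neg_one_pow_mul_pos {R : Type*} [CommRing R] [LinearOrder R]
    [IsStrictOrderedRing R] {a b : R} (i : ℕ) (ha : 0 < (-1) ^ i * a)
    (hb : 0 < (-1) ^ (i + 1) * b) : a * b < 0 := by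
  have heven : (-1 : R) ^ (2 * i) = 1 := (even_two_mul i).neg_one_pow
  have hprod : (-1) ^ i * a * ((-1) ^ (i + 1) * b) = -(a * b) := by
    linear_combination (-(a * b)) * heven
  linarith [mul_pos ha hb]

namespace Polynomial

theorem natCast_le_degree_of_sign_alternates {m : ℕ} {R : ℝ[X]} {x : Fin (m + 1) → ℝ}
    (hx : StrictAnti x) (hsign : ∀ i : Fin (m + 1), 0 < (-1) ^ (i : ℕ) * R.eval (x i)) :
    (m : WithBot ℕ) ≤ R.degree := by
  have hR : R ≠ 0 := by
    rintro rfl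
    simpa using hsign 0
  have hroot : ∀ i : Fin m, ∃ r ∈ Ioo (x i.succ) (x i.castSucc), R.eval r = 0 := fun i =>
    exists_mem_Ioo_eq_zero_of_mul_neg (hx i.castSucc_lt_succ).le R.continuousOn
      (by rw [mul_comm]; exact mul_neg_of_neg_one_pow_mul_pos i (hsign i.castSucc) (hsign i.succ))
  choose r hr hr0 using hroot
  have hr_anti : StrictAnti r := fun i j hij =>
    calc r j < x j.castSucc := (hr j).2
      _ ≤ x i.succ := hx.antitone (Fin.succ_le_castSucc_iff.mpr hij)
      _ < r i := (hr i).1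
  rw [degree_eq_natDegree hR, Nat.cast_le]
  by_contra! hlt
  exact hR (eq_zero_of_natDegree_lt_card_of_eval_eq_zero R hr_anti.injective hr0
    (by simpa using hlt))

theorem natCast_le_degree_sub_of_alternation {m : ℕ} {P Q : ℝ[X]} {x : Fin (m + 1) → ℝ}
    {M : ℝ} (hx : StrictAnti x) (hP : ∀ i : Fin (m + 1), P.eval (x i) = (-1) ^ (i : ℕ) * M)
    (hQ : ∀ i, |Q.eval (x i)| < M) : (m : WithBot ℕ) ≤ (P - Q).degree := by
  refine natCast_le_degree_of_sign_alternates hx fun i => ?_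
  have hsq : ((-1 : ℝ) ^ (i : ℕ)) ^ 2 = 1 := by rw [← pow_mul, pow_mul', neg_one_sq, one_pow]
  have hQi : (-1) ^ (i : ℕ) * Q.eval (x i) < M :=
    calc (-1) ^ (i : ℕ) * Q.eval (x i) ≤ |(-1) ^ (i : ℕ) * Q.eval (x i)| := le_abs_self _
      _ = |Q.eval (x i)| := by rw [abs_mul, abs_neg_one_pow, one_mul]
      _ < M := hQ i
  rw [eval_sub, hP, mul_sub, ← mul_assoc, ← sq, hsq, one_mul]
  linarith

theorem Monic.degree_sub_lt_of_natDegree_eq {R : Type*} [Ring R] [Nontrivial R] {P Q : R[X]}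
    {n : ℕ} (hP : P.Monic) (hQ : Q.Monic) (hPn : P.natDegree = n) (hQn : Q.natDegree = n) :
    (P - Q).degree < n := by
  rw [← hPn, ← degree_eq_natDegree hP.ne_zero]
  exact degree_sub_lt_left
    (by rw [degree_eq_natDegree hP.ne_zero, degree_eq_natDegree hQ.ne_zero, hPn, hQn])
    hP.ne_zero (by rw [hP.leadingCoeff, hQ.leadingCoeff])

end Polynomial

theorem alternation_implies_extremal_general (K : Set ℝ) (hK : IsCompact K) (n : ℕ)
    (P : Polynomial ℝ) (hP : P.Monic) (hdeg : P.natDegree = n)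
    (E : Fin (n + 1) → ℝ) (hE : StrictAnti E) (hEK : ∀ i, E i ∈ K)
    (halt : ∀ i, P.eval (E i) = (-1) ^ (i : ℕ) * sSup ((fun x => |P.eval x|) '' K)) :
    sSup ((fun x => |P.eval x|) '' K) = chebNorm K n := by
  refine (IsLeast.csInf_eq ?_).symm
  refine ⟨⟨P, hP, hdeg, rfl⟩, ?_⟩
  rintro _ ⟨Q, hQ, hQdeg, rfl⟩
  by_contra! hlt
  have hQE : ∀ i, |Q.eval (E i)| < sSup ((fun x => |P.eval x|) '' K) := fun i =>
    (le_csSup (hK.bddAbove_image (continuous_abs.comp Q.continuous).continuousOn)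
      ⟨E i, hEK i, rfl⟩).trans_lt hlt
  exact (natCast_le_degree_sub_of_alternation hE halt hQE).not_gt
    (hP.degree_sub_lt_of_natDegree_eq hQ hdeg hQdeg)

/-- Chebyshev alternation theorem (sufficiency direction): if a monic polynomial `P` of
degree `n` attains its sup on `K` with alternating signs at `n+1` points
`E_1 > ⋯ > E_{n+1}` of `K` (so `P(E_k) = (-1)^{k+1} sup_K |P|`), then `P` is extremal:
`sup_K |P| = L_n(K)`. -/
theorem alternation_implies_extremal (K : Set ℝ) (hK : IsCompact K) (n : ℕ) (hn : 1 ≤ n)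
    (P : Polynomial ℝ) (hP : P.Monic) (hdeg : P.natDegree = n)
    (E : Fin (n + 1) → ℝ) (hE : StrictAnti E) (hEK : ∀ i, E i ∈ K)
    (halt : ∀ i, P.eval (E i) = (-1) ^ (i : ℕ) * sSup ((fun x => |P.eval x|) '' K)) :
    sSup ((fun x => |P.eval x|) '' K) = chebNorm K n :=
  alternation_implies_extremal_general K hK n P hP hdeg E hE hEK halt
end

section
/- Let Δ_n be real polynomials of degree n with leading coefficient A_n^{-n}, A_n ∈ [c, C] with 0 < c ≤ C, whose zeros E_1^{(n)}, …, E_n^{(n)} satisfy: for a subset I_n ⊂ {1,…,n}, every zero with index outside I_n has distance at least d_j^{(n)} ≥ A_n from a fixed interval (E_L, E_R). If Σ ⊂ (E_L, E_R) is measurable with limsup (1/n) log|Δ_n(E)| ≤ 0 uniformly on Σ, and liminf_n #I_n/n > 0, then |Σ| ≤ 4 liminf_n [A_n^n / ∏_{j∉I_n} d_j^{(n)}]^{1/#I_n}. -/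
/-!
Away from `(E_L, E_R)` the far zeros contribute at least `∏_{j ∉ I_n} d_j` to `|∏_j (E - E_j)|`,
so `|Δ_n| ≤ e^{n ε_n}` on `Σ` bounds `∏_{j ∈ I_n} |E - E_j|` on `Σ` by
`A_n^n e^{n ε_n} / ∏_{j ∉ I_n} d_j`. Pólya's inequality `|Σ| ≤ 4 (sup_Σ ∏_{j ∈ I} |x - w_j|)^{1/#I}`
turns this into `|Σ| / 4 ≤ f_n e^{ε_n n / #I_n}`, with `f_n` the quantity under the liminf; the
exponential factor tends to `1` because `#I_n / n` stays away from `0`, and `f_n ≤ A_n ≤ C`.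

Pólya's inequality comes from Chebyshev's bound `sup_{[-1,1]} |P| ≥ 2^{1-k}` for monic `P` of degree
`k`: the distribution function `φ(x) = |Σ ∩ (-∞, x]|` is `1`-Lipschitz and every value in
`(0, |Σ|]` is taken on the closure of `Σ`, so the bound for `∏ |u - φ(w_j)|` on `[0, |Σ|]` is
inherited by `∏ |x - w_j|` on `Σ`.
-/

open MeasureTheory Filter Polynomial Set Topology
open scoped Finset ENNReal

theorem Polynomial.Monic.exists_mem_Icc_inv_two_pow_le_abs_eval {P : ℝ[X]} (hP : P.Monic) :
    ∃ s ∈ Icc (-1 : ℝ) 1, (2 ^ (P.natDegree - 1))⁻¹ ≤ |P.eval s| := by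
  obtain ⟨s, hs, hmax⟩ := isCompact_Icc.exists_isMaxOn (nonempty_Icc.2 (by norm_num : (-1 : ℝ) ≤ 1))
    (P.continuous.abs.continuousOn)
  refine ⟨s, hs, ?_⟩
  have hM : 0 < |P.eval s| := by
    refine (abs_nonneg _).lt_of_ne' fun h0 => hP.ne_zero (P.eq_zero_of_infinite_isRoot ?_)
    refine (Icc_infinite (by norm_num : (-1 : ℝ) < 1)).mono fun x hx => ?_
    simpa [h0] using hmax hx
  have hlc := Chebyshev.leadingCoeff_le_of_forall_abs_le_one (n := P.natDegree)
    (P := C |P.eval s|⁻¹ * P) ((degree_C_mul (inv_ne_zero hM.ne')).trans_le degree_le_natDegree)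
    fun x hx => by
      rw [eval_mul, eval_C, abs_mul, abs_inv, abs_abs, inv_mul_le_one₀ hM]
      exact hmax hx
  rw [leadingCoeff_mul, leadingCoeff_C, hP.leadingCoeff, mul_one] at hlc
  exact inv_le_of_inv_le₀ hM hlc

theorem exists_mem_Icc_pow_le_prod_abs_sub {ι : Type*} {a b : ℝ} (hab : a < b) (s : Finset ι)
    (v : ι → ℝ) : ∃ u ∈ Icc a b, ((b - a) / 4) ^ #s ≤ ∏ j ∈ s, |u - v j| := by
  set h := (b - a) / 2 with hh_def
  have hh : 0 < h := by positivity
  set c := (a + b) / 2 with hc_def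
  have hP : (∏ j ∈ s, (X - C ((v j - c) / h))).Monic :=
    monic_prod_of_monic _ _ fun j _ => monic_X_sub_C _
  obtain ⟨t, ⟨ht₁, ht₂⟩, hPt⟩ := hP.exists_mem_Icc_inv_two_pow_le_abs_eval
  rw [natDegree_prod_of_monic _ _ fun j _ => monic_X_sub_C _] at hPt
  simp only [natDegree_X_sub_C, Finset.sum_const, smul_eq_mul, mul_one, eval_prod, eval_sub,
    eval_X, eval_C, Finset.abs_prod] at hPt
  refine ⟨c + h * t, ⟨by nlinarith, by nlinarith⟩, ?_⟩
  have hscale : ∀ j ∈ s, |c + h * t - v j| = h * |t - (v j - c) / h| := fun j _ => by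
    rw [← abs_of_pos hh, ← abs_mul, abs_of_pos hh]
    congr 1
    field_simp
    ring
  calc ((b - a) / 4) ^ #s = h ^ #s * (2 ^ #s)⁻¹ := by
        rw [← div_eq_mul_inv, ← div_pow, hh_def]; ring_nf
    _ ≤ h ^ #s * (2 ^ (#s - 1))⁻¹ := by gcongr <;> norm_num
    _ ≤ h ^ #s * ∏ j ∈ s, |t - (v j - c) / h| := by gcongr
    _ = ∏ j ∈ s, |c + h * t - v j| := by
        rw [Finset.prod_congr rfl hscale, Finset.prod_mul_distrib, Finset.prod_const]

noncomputable def volumeIic (S : Set ℝ) (x : ℝ) : ℝ := (volume (S ∩ Iic x)).toReal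

section volumeIic

variable {S : Set ℝ}

theorem lipschitzWith_volumeIic (hS : volume S ≠ ∞) : LipschitzWith 1 (volumeIic S) := by
  refine LipschitzWith.of_le_add fun x y => ?_
  have hcover : S ∩ Iic x ⊆ (S ∩ Iic y) ∪ Ioc y x := fun z ⟨hzS, hzx⟩ =>
    (le_or_gt z y).imp (fun hzy => ⟨hzS, hzy⟩) fun hyz => ⟨hyz, hzx⟩
  have hfin : ∀ t, volume (S ∩ Iic t) ≠ ∞ := fun t => measure_ne_top_of_subset inter_subset_left hS
  calc volumeIic S x ≤ (volume (S ∩ Iic y) + volume (Ioc y x)).toReal :=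
        ENNReal.toReal_mono (by simp [hfin]) ((measure_mono hcover).trans (measure_union_le _ _))
    _ = volumeIic S y + (ENNReal.ofReal (x - y)).toReal := by
        rw [ENNReal.toReal_add (hfin y) (by simp), Real.volume_Ioc, volumeIic]
    _ ≤ volumeIic S y + dist x y := by
        gcongr
        rw [ENNReal.toReal_ofReal']
        exact max_le (le_abs_self _) dist_nonneg

theorem exists_mem_closure_volumeIic_eq {a b u : ℝ} (hSab : S ⊆ Icc a b) (hu : 0 < u)
    (huS : u ≤ (volume S).toReal) : ∃ y ∈ closure S, volumeIic S y = u := by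
  have hS : volume S ≠ ∞ := measure_ne_top_of_subset hSab (by simp)
  obtain ⟨x, rfl⟩ : u ∈ range (volumeIic S) := by
    refine intermediate_value_univ a b (lipschitzWith_volumeIic hS).continuous ⟨?_, ?_⟩
    · have : S ∩ Iic a ⊆ {a} := fun z ⟨hzS, hza⟩ => le_antisymm hza (hSab hzS).1
      simp [volumeIic, measure_mono_null this (Real.volume_singleton), hu.le]
    · rwa [volumeIic, inter_eq_left.2 (hSab.trans Icc_subset_Iic_self)]
  have hne : (S ∩ Iic x).Nonempty :=
    nonempty_of_measure_ne_zero (μ := volume) fun h0 => hu.ne' (by simp [volumeIic, h0])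
  have hbdd : BddAbove (S ∩ Iic x) := ⟨x, fun _ hz => hz.2⟩
  refine ⟨sSup (S ∩ Iic x), closure_mono inter_subset_left (csSup_mem_closure hne hbdd), ?_⟩
  have hsup : sSup (S ∩ Iic x) ≤ x := csSup_le hne fun _ hz => hz.2
  have htrunc : S ∩ Iic (sSup (S ∩ Iic x)) = S ∩ Iic x :=
    Subset.antisymm (fun z hz => ⟨hz.1, hz.2.trans hsup⟩) fun z hz => ⟨hz.1, le_csSup hbdd hz⟩
  rw [volumeIic, volumeIic, htrunc]

end volumeIic

theorem exists_mem_pow_lt_prod_abs_sub {ι : Type*} {S : Set ℝ} {a b : ℝ} (hSab : S ⊆ Icc a b)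
    {s : Finset ι} (hs : s.Nonempty) (w : ι → ℝ) {r : ℝ} (hr : 0 ≤ r)
    (hrS : r < (volume S).toReal) : ∃ x ∈ S, (r / 4) ^ #s < ∏ j ∈ s, |x - w j| := by
  set m := (volume S).toReal
  have hS : volume S ≠ ∞ := measure_ne_top_of_subset hSab (by simp)
  -- `[(m - r) / 2, m]` lies in `(0, m]` and is longer than `r`.
  obtain ⟨u, hu, hprod⟩ := exists_mem_Icc_pow_le_prod_abs_sub (a := (m - r) / 2) (b := m)
    (by linarith) s fun j => volumeIic S (w j)
  obtain ⟨y, hyS, rfl⟩ := exists_mem_closure_volumeIic_eq hSab (by linarith [hu.1]) hu.2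
  by_contra! hle
  have hy : ∏ j ∈ s, |y - w j| ≤ (r / 4) ^ #s :=
    closure_minimal hle (isClosed_le (continuous_finsetProd s fun j _ =>
      (continuous_id.sub continuous_const).abs) continuous_const) hyS
  have hlt : (r / 4) ^ #s < ((m - (m - r) / 2) / 4) ^ #s :=
    pow_lt_pow_left₀ (by linarith) (by linarith) hs.card_pos.ne'
  have hφ : ∏ j ∈ s, |volumeIic S y - volumeIic S (w j)| ≤ ∏ j ∈ s, |y - w j| :=
    Finset.prod_le_prod (fun _ _ => abs_nonneg _) fun j _ => by
      simpa [Real.dist_eq] using (lipschitzWith_volumeIic hS).dist_le_mul y (w j)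
  linarith

theorem volume_div_four_le_rpow_of_prod_abs_sub_le {ι : Type*} {S : Set ℝ} {a b : ℝ}
    (hSab : S ⊆ Icc a b) {s : Finset ι} (hs : s.Nonempty) (w : ι → ℝ) {M : ℝ} (hM : 0 ≤ M)
    (hSM : ∀ x ∈ S, ∏ j ∈ s, |x - w j| ≤ M) : (volume S).toReal / 4 ≤ M ^ (1 / (#s : ℝ)) := by
  by_contra! hlt
  obtain ⟨x, hxS, hx⟩ := exists_mem_pow_lt_prod_abs_sub hSab hs w (r := 4 * M ^ (1 / (#s : ℝ)))
    (by positivity) (by linarith)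
  rw [mul_div_cancel_left₀ _ four_ne_zero, one_div, Real.rpow_inv_natCast_pow hM hs.card_pos.ne']
    at hx
  exact (hx.trans_le (hSM x hxS)).false

theorem prod_abs_sub_le_div_prod {ι : Type*} [DecidableEq ι] {T I : Finset ι} (hIT : I ⊆ T)
    {Z d : ι → ℝ} {x B : ℝ}
    (hd : ∀ j ∈ T \ I, 0 < d j) (hdx : ∀ j ∈ T \ I, d j ≤ |x - Z j|)
    (hB : |∏ j ∈ T, (x - Z j)| ≤ B) : ∏ j ∈ I, |x - Z j| ≤ B / ∏ j ∈ T \ I, d j := by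
  rw [le_div_iff₀ (Finset.prod_pos hd)]
  calc (∏ j ∈ I, |x - Z j|) * ∏ j ∈ T \ I, d j
      ≤ (∏ j ∈ I, |x - Z j|) * ∏ j ∈ T \ I, |x - Z j| :=
        mul_le_mul_of_nonneg_left (Finset.prod_le_prod (fun j hj => (hd j hj).le) hdx)
          (Finset.prod_nonneg fun _ _ => abs_nonneg _)
    _ = |∏ j ∈ T, (x - Z j)| := by rw [Finset.abs_prod, mul_comm, Finset.prod_sdiff hIT]
    _ ≤ B := hB

theorem volume_div_four_le_rpow_div_prod {ι : Type*} [DecidableEq ι] {S : Set ℝ} {a b : ℝ}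
    (hSab : S ⊆ Icc a b) {T I : Finset ι} (hIT : I ⊆ T) (hI : I.Nonempty) {Z d : ι → ℝ}
    (hd : ∀ j ∈ T \ I, 0 < d j) (hdS : ∀ j ∈ T \ I, ∀ x ∈ S, d j ≤ |x - Z j|) {B : ℝ}
    (hB : 0 ≤ B) (hSB : ∀ x ∈ S, |∏ j ∈ T, (x - Z j)| ≤ B) :
    (volume S).toReal / 4 ≤ (B / ∏ j ∈ T \ I, d j) ^ (1 / (#I : ℝ)) :=
  volume_div_four_le_rpow_of_prod_abs_sub_le hSab hI Z
    (div_nonneg hB (Finset.prod_pos hd).le) fun x hx =>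
      prod_abs_sub_le_div_prod hIT hd (fun j hj => hdS j hj x hx) (hSB x hx)

theorem volume_div_four_le_rpow_mul_exp {ι : Type*} [DecidableEq ι] {S : Set ℝ} {a b : ℝ}
    (hSab : S ⊆ Icc a b) {T I : Finset ι} (hIT : I ⊆ T) (hI : I.Nonempty) {Z d : ι → ℝ}
    (hd : ∀ j ∈ T \ I, 0 < d j) (hdS : ∀ j ∈ T \ I, ∀ x ∈ S, d j ≤ |x - Z j|) {A : ℝ}
    (hA : 0 < A) {n : ℕ} (hn : 1 ≤ n) {e : ℝ}
    (hlog : ∀ x ∈ S, 1 / (n : ℝ) * Real.log |(A ^ n)⁻¹ * ∏ j ∈ T, (x - Z j)| ≤ e) :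
    (volume S).toReal / 4 ≤
      (A ^ n / ∏ j ∈ T \ I, d j) ^ (1 / (#I : ℝ)) * Real.exp (e * (n / #I)) := by
  have hAn := pow_pos hA n
  have hSB : ∀ x ∈ S, |∏ j ∈ T, (x - Z j)| ≤ A ^ n * Real.exp (n * e) := fun x hx => by
    have hx := hlog x hx
    rw [one_div, inv_mul_le_iff₀ (by positivity)] at hx
    rw [← mul_inv_cancel_left₀ hAn.ne' (∏ j ∈ T, _), abs_mul (A ^ n), abs_of_pos hAn]
    exact mul_le_mul_of_nonneg_left (Real.le_exp_of_log_le hx) hAn.le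
  calc (volume S).toReal / 4
      ≤ (A ^ n * Real.exp (n * e) / ∏ j ∈ T \ I, d j) ^ (1 / (#I : ℝ)) :=
        volume_div_four_le_rpow_div_prod hSab hIT hI hd hdS (by positivity) hSB
    _ = _ := by
        rw [mul_div_right_comm, Real.mul_rpow (div_nonneg hAn.le (Finset.prod_pos hd).le)
          (Real.exp_pos _).le, ← Real.exp_mul]
        ring_nf

theorem rpow_pow_card_div_prod_le {ι : Type*} [DecidableEq ι] {T I : Finset ι} (hIT : I ⊆ T)
    (hI : I.Nonempty) {A : ℝ} (hA : 0 < A) {d : ι → ℝ} (hd : ∀ j ∈ T \ I, A ≤ d j) :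
    (A ^ #T / ∏ j ∈ T \ I, d j) ^ (1 / (#I : ℝ)) ≤ A := by
  have hAd : A ^ #(T \ I) ≤ ∏ j ∈ T \ I, d j := by
    simpa using Finset.prod_le_prod (fun _ _ => hA.le) hd
  have hcard : A ^ #T = A ^ #(T \ I) * A ^ #I := by
    rw [← pow_add, Finset.card_sdiff_add_card_eq_card hIT]
  have hprod : 0 < ∏ j ∈ T \ I, d j := (pow_pos hA _).trans_le hAd
  calc (A ^ #T / ∏ j ∈ T \ I, d j) ^ (1 / (#I : ℝ)) ≤ (A ^ #I) ^ (1 / (#I : ℝ)) := by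
        refine Real.rpow_le_rpow (by positivity) ?_ (by positivity)
        rw [div_le_iff₀ hprod, hcard, mul_comm]
        gcongr
    _ = A := by rw [one_div, Real.pow_rpow_inv_natCast hA.le hI.card_pos.ne']

theorem le_liminf_of_le_mul_of_tendsto_one {α : Type*} {l : Filter α} [l.NeBot] {f g : α → ℝ}
    {a : ℝ} (hf : IsBoundedUnder (· ≤ ·) l f) (hg : Tendsto g l (𝓝 1))
    (h : ∀ᶠ x in l, a ≤ f x * g x) : a ≤ liminf f l := by
  have hag : Tendsto (fun x => a * (g x)⁻¹) l (𝓝 a) := by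
    simpa using (hg.inv₀ one_ne_zero).const_mul a
  rw [← hag.liminf_eq]
  refine liminf_le_liminf ?_ hag.isBoundedUnder_ge hf.isCoboundedUnder_ge
  filter_upwards [h, hg.eventually_const_lt one_pos] with x hx hgx
  exact (mul_inv_le_iff₀ hgx).2 hx

theorem eventually_ne_zero_of_liminf_div_pos {k : ℕ → ℕ}
    (hk : 0 < liminf (fun n => (k n : ℝ) / n) atTop) : ∀ᶠ n in atTop, k n ≠ 0 :=
  (eventually_lt_of_lt_liminf hk (isBoundedUnder_of ⟨0, fun n => by positivity⟩)).mono
    fun n hn h0 => by simp [h0] at hn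

theorem tendsto_mul_div_of_liminf_div_pos {ε : ℕ → ℝ} (hε : Tendsto ε atTop (𝓝 0)) {k : ℕ → ℕ}
    (hk : 0 < liminf (fun n => (k n : ℝ) / n) atTop) :
    Tendsto (fun n => ε n * (n / k n)) atTop (𝓝 0) := by
  refine hε.zero_mul_isBoundedUnder_le (isBoundedUnder_of_eventually_le
    (a := (liminf (fun n => (k n : ℝ) / n) atTop / 2)⁻¹) ?_)
  filter_upwards [eventually_lt_of_lt_liminf (half_lt_self hk)
    (isBoundedUnder_of ⟨0, fun n => by positivity⟩)] with n hn
  rw [Function.comp_apply, Real.norm_of_nonneg (by positivity), ← inv_div]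
  exact inv_anti₀ (half_pos hk) hn.le

theorem core_estimate_general (EL ER : ℝ) (S : Set ℝ)
    (hSsub : S ⊆ Set.Ioo EL ER)
    (A : ℕ → ℝ) (c C : ℝ) (hc : 0 < c) (hA : ∀ n, A n ∈ Set.Icc c C)
    (Z : ℕ → ℕ → ℝ) (I : ℕ → Finset ℕ) (hI : ∀ n, I n ⊆ Finset.Icc 1 n)
    (d : ℕ → ℕ → ℝ)
    (hd : ∀ n, ∀ j ∈ Finset.Icc 1 n \ I n,
      A n ≤ d n j ∧ ∀ x ∈ Set.Ioo EL ER, d n j ≤ |Z n j - x|)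
    (Δ : ℕ → ℝ → ℝ)
    (hΔ : ∀ n E, Δ n E = (A n ^ n)⁻¹ * ∏ j ∈ Finset.Icc 1 n, (E - Z n j))
    (ε : ℕ → ℝ) (hε : Tendsto ε atTop (nhds 0))
    (hunif : ∀ n : ℕ, 1 ≤ n → ∀ E ∈ S, (1 / (n : ℝ)) * Real.log |Δ n E| ≤ ε n)
    (hcard : 0 < atTop.liminf (fun n : ℕ => ((I n).card : ℝ) / n)) :
    (volume S).toReal ≤
      4 * atTop.liminf (fun n : ℕ =>
        (A n ^ n / ∏ j ∈ Finset.Icc 1 n \ I n, d n j) ^ (1 / ((I n).card : ℝ))) := by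
  have hApos : ∀ n, 0 < A n := fun n => hc.trans_le (hA n).1
  have hIne : ∀ᶠ n in atTop, (I n).Nonempty :=
    (eventually_ne_zero_of_liminf_div_pos hcard).mono fun _ => Finset.card_ne_zero.1
  have hbound : ∀ᶠ n in atTop, (volume S).toReal / 4 ≤
      (A n ^ n / ∏ j ∈ Finset.Icc 1 n \ I n, d n j) ^ (1 / ((I n).card : ℝ)) *
        Real.exp (ε n * (n / (I n).card)) := by
    filter_upwards [eventually_ge_atTop 1, hIne] with n hn hIn
    exact volume_div_four_le_rpow_mul_exp (hSsub.trans Ioo_subset_Icc_self) (hI n) hIn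
      (fun j hj => (hApos n).trans_le (hd n j hj).1)
      (fun j hj x hx => abs_sub_comm (Z n j) x ▸ (hd n j hj).2 x (hSsub hx)) (hApos n) hn
      fun x hx => hΔ n x ▸ hunif n hn x hx
  have hf : IsBoundedUnder (· ≤ ·) atTop fun n =>
      (A n ^ n / ∏ j ∈ Finset.Icc 1 n \ I n, d n j) ^ (1 / ((I n).card : ℝ)) :=
    isBoundedUnder_of_eventually_le (a := C) <| hIne.mono fun n hIn => by
      have := rpow_pow_card_div_prod_le (hI n) hIn (hApos n) fun j hj => (hd n j hj).1
      rw [Nat.card_Icc, Nat.add_sub_cancel] at this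
      exact this.trans (hA n).2
  have hg := (tendsto_mul_div_of_liminf_div_pos hε hcard).rexp
  rw [Real.exp_zero] at hg
  linarith [le_liminf_of_le_mul_of_tendsto_one hf hg hbound]

/-- Core estimate of Theorem 1.1: if `Δ_n(E) = A_n^{-n} ∏_{j=1}^n (E - Z_j^{(n)})`, where
the zeros with indices outside `I_n` are at distance at least `d_j^{(n)} ≥ A_n` from the
interval `(E_L, E_R)`, and `(1/n) log |Δ_n| ≤ ε_n → 0` uniformly on a measurable
`Σ ⊆ (E_L, E_R)`, and `liminf #I_n/n > 0`, then
`|Σ| ≤ 4 liminf [A_n^n / ∏_{j ∉ I_n} d_j^{(n)}]^{1/#I_n}`. -/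
theorem core_estimate (EL ER : ℝ) (S : Set ℝ) (hS : MeasurableSet S)
    (hSsub : S ⊆ Set.Ioo EL ER)
    (A : ℕ → ℝ) (c C : ℝ) (hc : 0 < c) (hcC : c ≤ C) (hA : ∀ n, A n ∈ Set.Icc c C)
    (Z : ℕ → ℕ → ℝ) (I : ℕ → Finset ℕ) (hI : ∀ n, I n ⊆ Finset.Icc 1 n)
    (d : ℕ → ℕ → ℝ)
    (hd : ∀ n, ∀ j ∈ Finset.Icc 1 n \ I n,
      A n ≤ d n j ∧ ∀ x ∈ Set.Ioo EL ER, d n j ≤ |Z n j - x|)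
    (Δ : ℕ → ℝ → ℝ)
    (hΔ : ∀ n E, Δ n E = (A n ^ n)⁻¹ * ∏ j ∈ Finset.Icc 1 n, (E - Z n j))
    (ε : ℕ → ℝ) (hε : Tendsto ε atTop (nhds 0))
    (hunif : ∀ n : ℕ, 1 ≤ n → ∀ E ∈ S, (1 / (n : ℝ)) * Real.log |Δ n E| ≤ ε n)
    (hcard : 0 < atTop.liminf (fun n : ℕ => ((I n).card : ℝ) / n)) :
    (volume S).toReal ≤
      4 * atTop.liminf (fun n : ℕ =>
        (A n ^ n / ∏ j ∈ Finset.Icc 1 n \ I n, d n j) ^ (1 / ((I n).card : ℝ))) :=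
  core_estimate_general EL ER S hSsub A c C hc hA Z I hI d hd Δ hΔ ε hε hunif hcard
end

section
/- (Interpolation derivative formula) Fix distinct points E_1,…,E_m and a function s that is nonzero and differentiable near each E_i. Let 𝒯(E; E_1,…,E_m) = Σ_{i=1}^m ((-1)^i / s(E_i)) ∏_{j≠i} (E − E_j)/(E_i − E_j) + ∏_{i=1}^m (E − E_i). Then for every E* and every k, ∂𝒯(E*; E_1,…,E_m)/∂E_k = −(ℬ_k(E*)/(ℬ_k · s(E_k))) · d/dE|_{E=E_k} [𝒯(E; E_1,…,E_m) s(E)], where ℬ_k(E) = ∏_{j≠k}(E − E_j) and ℬ_k = ℬ_k(E_k). -/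
/-!
Moving the node `E_k` to `t` changes `𝒯` by a polynomial of degree `< m` that vanishes at the
other nodes, hence by a multiple of `ℬ_k`:
`𝒯(x; E_k := t) = 𝒯(x) + ℬ_k(x) (c(t) - 𝒯(t)) / ℬ_k(t)`, where `c(t) = ± 1 / s(t)` is the value
prescribed at the moved node. The numerator vanishes at `t = E_k`, so only its derivative
`c' - 𝒯'` survives, and `c' - 𝒯' = -(𝒯 s)' / s` at `E_k` because `𝒯(E_k) s(E_k) = ± 1`.
-/

open Filter Finset

/-- The interpolation polynomial
`𝒯(E; E_1,…,E_m) = Σ_i ((-1)^i / s(E_i)) ∏_{j≠i} (E - E_j)/(E_i - E_j) + ∏_i (E - E_i)`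
(with `1`-based signs: the `Fin m` index `i` corresponds to the node `E_{i+1}`). -/
noncomputable def interp (m : ℕ) (s : ℝ → ℝ) (v : Fin m → ℝ) (x : ℝ) : ℝ :=
  (∑ i : Fin m, ((-1 : ℝ) ^ ((i : ℕ) + 1) / s (v i)) *
    ∏ j ∈ Finset.univ.erase i, (x - v j) / (v i - v j)) +
  ∏ i : Fin m, (x - v i)

open Polynomial Lagrange

theorem Function.Injective.update_of_forall_ne {ι α : Type*} [DecidableEq ι] {v : ι → α}
    (hv : Function.Injective v) {k : ι} {t : α} (ht : ∀ j, j ≠ k → t ≠ v j) :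
    Function.Injective (Function.update v k t) := by
  intro i j hij
  simp only [Function.update_apply] at hij
  split_ifs at hij with hi hj hj
  · exact hi.trans hj.symm
  · exact absurd hij (ht j hj)
  · exact absurd hij.symm (ht i hi)
  · exact hv hij

theorem HasDerivAt.div_of_eq_zero {𝕜 : Type*} [NontriviallyNormedField 𝕜] {f g : 𝕜 → 𝕜}
    {f' g' a : 𝕜} (hf : HasDerivAt f f' a) (hg : HasDerivAt g g' a) (hfa : f a = 0) (hga : g a ≠ 0) :
    HasDerivAt (fun x => f x / g x) (f' / g a) a :=
  (hf.div hg hga).congr_deriv (by rw [hfa]; field_simp; ring)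

theorem Polynomial.degree_sub_lt_of_monic {R : Type*} [Ring R] [Nontrivial R] {p q : R[X]}
    (hp : p.Monic) (hq : q.Monic) (hpq : p.degree = q.degree) : (p - q).degree < p.degree :=
  degree_sub_lt_left hpq hp.ne_zero (hp.leadingCoeff.trans hq.leadingCoeff.symm)

section

variable {m : ℕ} (s : ℝ → ℝ)

noncomputable def interpNodeValue (v : Fin m → ℝ) (i : Fin m) : ℝ :=
  (-1 : ℝ) ^ ((i : ℕ) + 1) / s (v i)

noncomputable def interpPoly (v : Fin m → ℝ) : ℝ[X] :=
  nodal univ v + interpolate univ v (interpNodeValue s v)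

theorem eval_interpPoly (v : Fin m → ℝ) (x : ℝ) : (interpPoly s v).eval x = interp m s v x := by
  simp [interpPoly, interp, interpNodeValue, eval_nodal, interpolate_apply, eval_finsetSum,
    Lagrange.basis, eval_prod, basisDivisor, div_eq_mul_inv, mul_comm, add_comm]

theorem degree_interpPoly_sub_lt {v w : Fin m → ℝ} (hv : Function.Injective v)
    (hw : Function.Injective w) : (interpPoly s v - interpPoly s w).degree < m := by
  have hnodal : (nodal univ v - nodal univ w).degree < m := by
    simpa [degree_nodal] using
      degree_sub_lt_of_monic (nodal_monic (s := univ) (v := v)) nodal_monic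
        (by rw [degree_nodal, degree_nodal])
  have hinterp : ∀ u : Fin m → ℝ, Function.Injective u →
      (interpolate univ u (interpNodeValue s u)).degree < m := fun u hu => by
    simpa using degree_interpolate_lt (s := univ) (interpNodeValue s u) hu.injOn
  rw [interpPoly, interpPoly, add_sub_add_comm]
  exact (degree_add_le _ _).trans_lt <| max_lt hnodal <|
    (degree_sub_le _ _).trans_lt (max_lt (hinterp v hv) (hinterp w hw))

variable {s}

theorem interp_node {v : Fin m → ℝ} (hv : Function.Injective v) (i : Fin m) :
    interp m s v (v i) = interpNodeValue s v i := by
  rw [← eval_interpPoly, interpPoly, eval_add, eval_nodal_at_node (mem_univ i),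
    eval_interpolate_at_node _ hv.injOn (mem_univ i), zero_add]

theorem interp_update {v : Fin m → ℝ} (hv : Function.Injective v) {k : Fin m} {t : ℝ}
    (ht : ∀ j, j ≠ k → t ≠ v j) (x : ℝ) :
    interp m s (Function.update v k t) x = interp m s v x +
      ((-1 : ℝ) ^ ((k : ℕ) + 1) / s t - interp m s v t) / (∏ j ∈ univ.erase k, (t - v j)) *
        ∏ j ∈ univ.erase k, (x - v j) := by
  set v' := Function.update v k t
  have hv' : Function.Injective v' := hv.update_of_forall_ne ht
  set B := nodal (univ.erase k) v
  set α := ((-1 : ℝ) ^ ((k : ℕ) + 1) / s t - interp m s v t) / B.eval t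
  have hBt : B.eval t ≠ 0 := by
    rw [eval_nodal]
    exact prod_ne_zero_iff.2 fun j hj => sub_ne_zero.2 (ht j (ne_of_mem_erase hj))
  have hαB : (C α * B).degree < m := by
    rw [C_mul']
    refine (degree_smul_le α B).trans_lt ?_
    rw [degree_nodal]
    exact_mod_cast (card_erase_lt_of_mem (mem_univ k)).trans_eq (card_fin m)
  have hpoly : interpPoly s v' = interpPoly s v + C α * B := by
    refine eq_of_degree_sub_lt_of_eval_index_eq (v := v') univ hv'.injOn ?_ fun i _ => ?_
    · rw [← sub_sub, card_fin]
      exact (degree_sub_le _ _).trans_lt (max_lt (degree_interpPoly_sub_lt s hv' hv) hαB)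
    · rw [eval_interpPoly, eval_add, eval_interpPoly, eval_mul, eval_C, interp_node hv']
      rcases eq_or_ne i k with rfl | hik
      · simp [v', interpNodeValue, α, div_mul_cancel₀ _ hBt]
      · simp [v', Function.update_of_ne hik, interp_node hv, interpNodeValue, B,
          eval_nodal_at_node (mem_erase.2 ⟨hik, mem_univ i⟩)]
  simpa [← eval_interpPoly, B, eval_nodal, α] using congrArg (eval x) hpoly

end

/-- Interpolation derivative formula (Proposition 4.1):
`∂𝒯(E*;E_1,…,E_m)/∂E_k = -(ℬ_k(E*)/(ℬ_k s(E_k))) d/dE|_{E=E_k} [𝒯(E) s(E)]`,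
where `ℬ_k(E) = ∏_{j≠k}(E - E_j)` and `ℬ_k = ℬ_k(E_k)`. -/
theorem interp_deriv_formula (m : ℕ) (s : ℝ → ℝ) (E : Fin m → ℝ)
    (hinj : Function.Injective E)
    (hs : ∀ i, ∀ᶠ x in nhds (E i), s x ≠ 0 ∧ DifferentiableAt ℝ s x)
    (k : Fin m) (Estar : ℝ) :
    deriv (fun t => interp m s (Function.update E k t) Estar) (E k) =
      -((∏ j ∈ Finset.univ.erase k, (Estar - E j)) /
          ((∏ j ∈ Finset.univ.erase k, (E k - E j)) * s (E k))) *
        deriv (fun x => interp m s E x * s x) (E k) := by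
  obtain ⟨hs0, hsd⟩ := (hs k).self_of_nhds
  set T := interp m s E
  set B : ℝ → ℝ := fun x => ∏ j ∈ univ.erase k, (x - E j)
  have hT : DifferentiableAt ℝ T (E k) := by
    simpa [T, eval_interpPoly] using (interpPoly s E).differentiableAt (x := E k)
  have hB : DifferentiableAt ℝ B (E k) := by fun_prop
  have hBk : B (E k) ≠ 0 :=
    prod_ne_zero_iff.2 fun j hj => sub_ne_zero.2 (hinj.ne (ne_of_mem_erase hj).symm)
  have hTk : T (E k) = (-1 : ℝ) ^ ((k : ℕ) + 1) / s (E k) := interp_node hinj k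
  have hlocal : (fun t => interp m s (Function.update E k t) Estar) =ᶠ[nhds (E k)]
      fun t => T Estar + ((-1 : ℝ) ^ ((k : ℕ) + 1) / s t - T t) / B t * B Estar := by
    have hnodes : ∀ᶠ t in nhds (E k), ∀ j, j ≠ k → t ≠ E j :=
      eventually_all.2 fun j => eventually_imp_distrib_left.2 fun hjk =>
        eventually_ne_nhds (hinj.ne hjk.symm)
    exact hnodes.mono fun t ht => interp_update hinj ht Estar
  have hnum := ((hasDerivAt_const (E k) ((-1 : ℝ) ^ ((k : ℕ) + 1))).fun_div hsd.hasDerivAt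
    hs0).fun_sub hT.hasDerivAt
  have hderiv := ((hnum.div_of_eq_zero hB.hasDerivAt (by rw [hTk, sub_self]) hBk).mul_const
    (B Estar)).const_add (T Estar)
  rw [hlocal.deriv_eq, hderiv.deriv, deriv_fun_mul hT hsd, hTk]
  simp only [B] at hBk ⊢
  field_simp
  ring
end
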